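/- Let K be a self-similar compact set of module μ and ratio ρ, with T_u := K^(u) \ K^(u+1). Then for every ordinal α < ω^ω and every u ≥ 0, the sequence T_u[ωα + n] converges to T_{u+1}[α] as n → ∞; in particular, for u = μ−1, T_{μ−1}[ωα + n] converges to T_0[α]/ρ. -/

import Mathlib

/-!
Enumerate `K` decreasingly as `K[α]`, `α ≤ ω ^ ω`. As the enumeration reverses a well-order and
`K` is closed, `K[l]` is the limit of `K[β]` along any family of indices `β < l` cofinal in `l`;
hence `K[α]` is an accumulation point of `K[D]` exactly when `α` is an accumulation point of `D`
among the ordinals. Iterating, `K^(u)` consists of the `K[α]` with `α` a multiple of `ω ^ u`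
(nonzero if `u > 0`), so that `T_u[β] = K[ω ^ u * (β + 1)]` (except `T_0[β] = K[β]` for finite
`β`), and `T_u[ω * α + n]` climbs to `T_(u+1)[α] = K[ω ^ (u + 1) * (α + 1)]`.
Multiplication by `ρ` is a homeomorphism taking `K^(μ)` onto `K`, hence `T_μ` onto `T_0`
monotonically, and uniqueness of enumerations gives `T_μ[α] = T_0[α] / ρ`.
-/

open Ordinal Filter Topology Set

/-- The `n`-th derived set of `A ⊆ ℝ`. -/
noncomputable def iterDeriv (A : Set ℝ) (n : ℕ) : Set ℝ := (derivedSet (X := ℝ))^[n] A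

/-- The ordinal `ω ^ ω`. -/
noncomputable def wOmega : Ordinal.{0} := Ordinal.omega0 ^ Ordinal.omega0

/-- An enumeration of `K ⊆ ℝ` witnessing that `K`, with the reverse of the usual order,
is well-ordered with order type `ω ^ ω + 1`: its elements are exactly `e α` for
`α ≤ ω ^ ω`, and the enumeration is strictly order-reversing. `e α` is the element
written `K[α]`. -/
structure OrdEnum (K : Set ℝ) where
  e : Ordinal.{0} → ℝ
  mem : ∀ α ≤ wOmega, e α ∈ K
  surj : ∀ x ∈ K, ∃ α ≤ wOmega, e α = x
  anti : ∀ ⦃α β : Ordinal.{0}⦄, α ≤ wOmega → β ≤ wOmega → (α < β ↔ e β < e α)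

/-- An enumeration of a set `S ⊆ ℝ` of reverse-order type `ω ^ ω` (indices `α < ω ^ ω`),
strictly order-reversing; `e α` is the element written `S[α]`. -/
structure SubEnum (S : Set ℝ) where
  e : Ordinal.{0} → ℝ
  mem : ∀ α < wOmega, e α ∈ S
  surj : ∀ x ∈ S, ∃ α < wOmega, e α = x
  anti : ∀ ⦃α β : Ordinal.{0}⦄, α < wOmega → β < wOmega → (α < β ↔ e β < e α)

/-- A self-similar compact set of ratio `ρ > 1` and module `μ ≥ 1`:
a compact `K ⊆ [0, ∞)`, well-ordered by the reverse usual order with order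
type `ω ^ ω + 1`, satisfying `ρ • K^(μ) = K`. -/
def SelfSimilar (K : Set ℝ) (ρ : ℝ) (μ : ℕ) : Prop :=
  IsCompact K ∧ K ⊆ Set.Ici 0 ∧ 1 < ρ ∧ 1 ≤ μ ∧
    (fun x => ρ * x) '' iterDeriv K μ = K ∧ Nonempty (OrdEnum K)

open Order

theorem StrictAntiOn.eqOn_of_image_eq {α β : Type*} [LinearOrder α] [WellFoundedLT α]
    [LinearOrder β] {s : Set α} {f g : α → β} (hf : StrictAntiOn f s) (hg : StrictAntiOn g s)
    (h : f '' s = g '' s) : EqOn f g s := by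
  have hf' : StrictMono fun x : s => OrderDual.toDual (f x) := fun x y hxy => hf x.2 y.2 hxy
  have hg' : StrictMono fun x : s => OrderDual.toDual (g x) := fun x y hxy => hg x.2 y.2 hxy
  have hrange : range (fun x : s => OrderDual.toDual (f x)) =
      range fun x : s => OrderDual.toDual (g x) := by
    simp only [range_comp' OrderDual.toDual, ← image_eq_range, h]
  intro x hx
  exact congrArg OrderDual.ofDual (congrFun ((hf'.range_inj hg').1 hrange) ⟨x, hx⟩)

theorem Homeomorph.image_derivedSet {X Y : Type*} [TopologicalSpace X] [TopologicalSpace Y]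
    (f : X ≃ₜ Y) (A : Set X) : f '' derivedSet A = derivedSet (f '' A) := by
  refine (f.continuous.image_derivedSet f.injective).antisymm ?_
  have := f.symm.continuous.image_derivedSet f.symm.injective (A := f '' A)
  rw [f.image_symm, f.preimage_image] at this
  exact fun y hy => ⟨f.symm y, this (by simpa using hy), f.apply_symm_apply y⟩

lemma iterDeriv_succ (A : Set ℝ) (n : ℕ) :
    iterDeriv A (n + 1) = derivedSet (iterDeriv A n) :=
  Function.iterate_succ_apply' _ _ _

lemma iterDeriv_iterDeriv (A : Set ℝ) (m n : ℕ) :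
    iterDeriv (iterDeriv A m) n = iterDeriv A (n + m) :=
  (Function.iterate_add_apply _ _ _ _).symm

lemma isClosed_iterDeriv {A : Set ℝ} (hA : IsClosed A) : ∀ n, IsClosed (iterDeriv A n)
  | 0 => hA
  | n + 1 => iterDeriv_succ A n ▸ isClosed_derivedSet _

lemma Homeomorph.iterDeriv_image (f : ℝ ≃ₜ ℝ) (A : Set ℝ) :
    ∀ n, iterDeriv (f '' A) n = f '' iterDeriv A n
  | 0 => rfl
  | n + 1 => by rw [iterDeriv_succ, iterDeriv_succ, f.iterDeriv_image A n, f.image_derivedSet]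

lemma isSuccLimit_wOmega : IsSuccLimit wOmega :=
  isSuccLimit_opow one_lt_omega0 isSuccLimit_omega0

lemma opow_mul_wOmega (u : ℕ) : ω ^ (u : Ordinal) * wOmega = wOmega := by
  rw [wOmega, ← opow_add, add_omega0 (natCast_lt_omega0 u)]

lemma opow_mul_add_one_lt_wOmega (u : ℕ) {β : Ordinal} (hβ : β < wOmega) :
    ω ^ (u : Ordinal) * (β + 1) < wOmega := by
  conv_rhs => rw [← opow_mul_wOmega u]
  gcongr
  · exact opow_pos _ omega0_pos
  · exact isSuccLimit_wOmega.add_one_lt hβ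

namespace OrdEnum

variable {K : Set ℝ} (E : OrdEnum K)

lemma strictAntiOn : StrictAntiOn E.e (Iic wOmega) :=
  fun _ hα _ hβ => (E.anti hα hβ).1

lemma image_Iic : E.e '' Iic wOmega = K :=
  (image_subset_iff.2 E.mem).antisymm fun x hx => E.surj x hx

/-- The infimum of `E.e '' D` lies in the closed set `K`, so it is some `E.e γ`, and cofinality
of `D` forces `γ = l`. -/
lemma isGLB_image (hK : IsClosed K) {D : Set Ordinal} {l : Ordinal} (hl : l ≤ wOmega)
    (hDl : D ⊆ Iio l) (hne : D.Nonempty) (hcof : ∀ b < l, ∃ β ∈ D, b < β) :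
    IsGLB (E.e '' D) (E.e l) := by
  have hD : D ⊆ Iic wOmega := fun β hβ => (hDl hβ).le.trans hl
  have hlower : E.e l ∈ lowerBounds (E.e '' D) := by
    rintro _ ⟨β, hβ, rfl⟩
    exact (E.strictAntiOn (hD hβ) hl (hDl hβ)).le
  have hglb := isGLB_csInf (hne.image E.e) ⟨_, hlower⟩
  have hmem : sInf (E.e '' D) ∈ K := by
    refine hK.closure_subset_iff.2 ?_ (hglb.mem_closure (hne.image E.e))
    exact (image_mono hD).trans E.image_Iic.subset
  obtain ⟨γ, hγ, hγe⟩ := E.surj _ hmem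
  have hlγ : l ≤ γ := by
    refine not_lt.1 fun hγl => ?_
    obtain ⟨β, hβ, hγβ⟩ := hcof γ hγl
    have := hglb.1 (mem_image_of_mem E.e hβ)
    rw [← hγe] at this
    exact this.not_gt (E.strictAntiOn hγ (hD hβ) hγβ)
  rwa [le_antisymm (hγe ▸ E.strictAntiOn.antitoneOn hl hγ hlγ) (hglb.2 hlower)] at hglb

lemma tendsto_comp (hK : IsClosed K) {s : ℕ → Ordinal} {l : Ordinal} (hs : Monotone s)
    (hsl : ∀ n, s n < l) (hl : l ≤ wOmega) (hcof : ∀ b < l, ∃ n, b < s n) :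
    Tendsto (E.e ∘ s) atTop (𝓝 (E.e l)) := by
  have hsw : ∀ n, s n ≤ wOmega := fun n => (hsl n).le.trans hl
  refine tendsto_atTop_isGLB (fun m n hmn => E.strictAntiOn.antitoneOn (hsw m) (hsw n) (hs hmn))
    ?_
  rw [range_comp]
  refine E.isGLB_image hK hl (range_subset_iff.2 hsl) (range_nonempty s) fun b hb => ?_
  obtain ⟨n, hn⟩ := hcof b hb
  exact ⟨s n, mem_range_self n, hn⟩

lemma exists_gap_below {α : Ordinal} (hα : α ≤ wOmega) :
    ∃ d < E.e α, ∀ β ≤ wOmega, α < β → E.e β ≤ d := by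
  rcases hα.lt_or_eq with hα | rfl
  · have hsucc : α + 1 ≤ wOmega := (isSuccLimit_wOmega.add_one_lt hα).le
    refine ⟨E.e (α + 1), E.strictAntiOn hα.le hsucc (lt_add_one α), fun β hβ hαβ => ?_⟩
    exact E.strictAntiOn.antitoneOn hsucc hβ (add_one_le_iff.2 hαβ)
  · exact ⟨E.e wOmega - 1, sub_one_lt _, fun β hβ hαβ => absurd hβ hαβ.not_ge⟩

lemma e_mem_derivedSet_image_iff (hK : IsClosed K) {D : Set Ordinal} (hD : D ⊆ Iic wOmega)
    {α : Ordinal} (hα : α ≤ wOmega) :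
    E.e α ∈ derivedSet (E.e '' D) ↔ α ∈ derivedSet D := by
  rw [mem_derivedSet, mem_derivedSet, SuccOrder.accPt_principal (a := α)]
  constructor
  · intro hacc
    obtain ⟨d, hd, hgap⟩ := E.exists_gap_below hα
    -- by the gap, points of `E.e '' D` close to `E.e α` lie above it, i.e. have smaller index
    have hbelow : ∀ c > E.e α, ∃ β ∈ D, β < α ∧ E.e β < c := by
      intro c hc
      obtain ⟨_, ⟨hy, β, hβ, rfl⟩, hne⟩ := accPt_iff_nhds.1 hacc _ (Ioo_mem_nhds hd hc)
      refine ⟨β, hβ, lt_of_le_of_ne (not_lt.1 fun hαβ => ?_) (ne_of_apply_ne E.e hne), hy.2⟩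
      exact (hgap β (hD hβ) hαβ).not_gt hy.1
    refine ⟨fun hmin => ?_, fun b hb => ?_⟩
    · obtain ⟨β, -, hβα, -⟩ := hbelow (E.e α + 1) (lt_add_one _)
      exact hmin.not_lt hβα
    · obtain ⟨β, hβ, hβα, hβb⟩ := hbelow (E.e b) (E.strictAntiOn (hb.le.trans hα) hα hb)
      exact ⟨β, hβ, (E.strictAntiOn.lt_iff_gt (hD hβ) (hb.le.trans hα)).1 hβb, hβα⟩
  · rintro ⟨hmin, hcof⟩
    obtain ⟨b, hb⟩ := not_isMin_iff.1 hmin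
    have hglb : IsGLB (E.e '' (D ∩ Iio α)) (E.e α) := by
      refine E.isGLB_image hK hα inter_subset_right ?_ fun b hb => ?_
      · obtain ⟨β, hβ, -, hβα⟩ := hcof b hb
        exact ⟨β, hβ, hβα⟩
      · obtain ⟨β, hβ, hbβ, hβα⟩ := hcof b hb
        exact ⟨β, ⟨hβ, hβα⟩, hbβ⟩
    refine accPt_iff_nhds.2 fun U hU => ?_
    obtain ⟨c, hc, hcU⟩ := exists_Ico_subset_of_mem_nhds hU ⟨_, lt_add_one (E.e α)⟩
    obtain ⟨_, ⟨β, ⟨hβ, hβα⟩, rfl⟩, hle, hlt⟩ := hglb.exists_between hc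
    exact ⟨E.e β, ⟨hcU ⟨hle, hlt⟩, β, hβ, rfl⟩,
      (E.strictAntiOn (hD hβ) hα hβα).ne'⟩

lemma relDerivedSet_image (hK : IsClosed K) {D : Set Ordinal} (hD : D ⊆ Iic wOmega) :
    relDerivedSet (E.e '' D) = E.e '' relDerivedSet D := by
  ext x
  simp only [relDerivedSet_apply, mem_inter_iff, mem_image]
  constructor
  · rintro ⟨hx, β, hβ, rfl⟩
    exact ⟨β, ⟨(E.e_mem_derivedSet_image_iff hK hD (hD hβ)).1 hx, hβ⟩, rfl⟩
  · rintro ⟨β, ⟨hx, hβ⟩, rfl⟩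
    exact ⟨(E.e_mem_derivedSet_image_iff hK hD (hD hβ)).2 hx, β, hβ, rfl⟩

end OrdEnum

lemma Ordinal.isSuccPrelimit_iff_forall_lt_mul {a γ : Ordinal} (ha : a ≠ 0) :
    IsSuccPrelimit γ ↔ ∀ b < a * γ, ∃ ξ < γ, b < a * ξ := by
  constructor
  · intro hγ b hb
    exact ⟨succ (b / a), hγ.succ_lt ((lt_mul_iff_div_lt ha).1 hb), lt_mul_succ_div b ha⟩
  · intro h
    by_contra hγ
    obtain ⟨δ, hδ⟩ := not_isSuccPrelimit_iff.1 hγ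
    obtain ⟨ξ, hξ, hδξ⟩ := h (a * δ) (mul_lt_mul_of_pos_left hδ.lt (pos_iff_ne_zero.2 ha))
    exact hδ.2 ((mul_lt_mul_iff_of_pos_left (pos_iff_ne_zero.2 ha)).1 hδξ) hξ

/-- `E.e '' derivIndices u` is the `u`-th derived set of `K`; index `0` (the maximum of `K`)
is isolated, hence the condition `α ≠ 0` for `u > 0`. -/
def derivIndices (u : ℕ) : Set Ordinal :=
  {α | α ≤ wOmega ∧ ω ^ (u : Ordinal) ∣ α ∧ (u = 0 ∨ α ≠ 0)}

lemma derivIndices_subset_Iic (u : ℕ) : derivIndices u ⊆ Iic wOmega := fun _ hα => hα.1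

lemma relDerivedSet_derivIndices (u : ℕ) :
    relDerivedSet (derivIndices u) = derivIndices (u + 1) := by
  have hpow : (ω : Ordinal) ^ (u : Ordinal) ≠ 0 := (opow_pos _ omega0_pos).ne'
  have hpow_succ : (ω : Ordinal) ^ ((u + 1 : ℕ) : Ordinal) = ω ^ (u : Ordinal) * ω := by
    rw [Nat.cast_succ, opow_add_one]
  ext α
  rw [relDerivedSet_apply, mem_inter_iff, mem_derivedSet, SuccOrder.accPt_principal,
    isMin_iff_eq_bot]
  constructor
  · rintro ⟨⟨hα0, hacc⟩, hαw, ⟨γ, rfl⟩, -⟩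
    have hγ : IsSuccPrelimit γ := by
      refine (isSuccPrelimit_iff_forall_lt_mul hpow).2 fun b hb => ?_
      obtain ⟨_, ⟨-, ⟨ξ, rfl⟩, -⟩, hbξ, hξγ⟩ := hacc b hb
      exact ⟨ξ, (mul_lt_mul_iff_of_pos_left (pos_iff_ne_zero.2 hpow)).1 hξγ, hbξ⟩
    obtain ⟨d, rfl⟩ := isSuccPrelimit_iff_omega0_dvd.1 hγ
    exact ⟨hαw, ⟨d, by rw [hpow_succ, mul_assoc]⟩, Or.inr hα0⟩
  · rintro ⟨hαw, ⟨d, rfl⟩, h0⟩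
    have hα0 := h0.resolve_left (Nat.succ_ne_zero u)
    rw [hpow_succ, mul_assoc] at hαw hα0 ⊢
    refine ⟨⟨hα0, fun b hb => ?_⟩, hαw, dvd_mul_right _ _, Or.inr hα0⟩
    obtain ⟨ξ, hξ, hbξ⟩ := (isSuccPrelimit_iff_forall_lt_mul hpow).1
      (isSuccPrelimit_iff_omega0_dvd.2 (dvd_mul_right ω d)) b hb
    have hlt := (mul_lt_mul_iff_of_pos_left (pos_iff_ne_zero.2 hpow)).2 hξ
    exact ⟨_, ⟨(hlt.trans_le hαw).le, dvd_mul_right _ _, Or.inr (pos_of_gt hbξ).ne'⟩, hbξ, hlt⟩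

lemma OrdEnum.iterDeriv_eq_image {K : Set ℝ} (E : OrdEnum K) (hK : IsClosed K) :
    ∀ u, iterDeriv K u = E.e '' derivIndices u
  | 0 => by
    have hI : derivIndices 0 = Iic wOmega := by ext; simp [derivIndices]
    rw [hI, E.image_Iic]
    rfl
  | u + 1 => by
    rw [iterDeriv_succ, ← (isClosed_iterDeriv hK u).relDerivedSet_eq,
      E.iterDeriv_eq_image hK u, E.relDerivedSet_image hK (derivIndices_subset_Iic u),
      relDerivedSet_derivIndices]

lemma Ordinal.exists_eq_add_one_of_not_omega0_dvd {γ : Ordinal} (h : ¬ ω ∣ γ) :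
    ∃ δ, γ = δ + 1 := by
  obtain ⟨δ, hδ⟩ := not_isSuccPrelimit_iff.1 (mt isSuccPrelimit_iff_omega0_dvd.1 h)
  exact ⟨δ, hδ.succ_eq.symm⟩

/-- `sectionIndex u` enumerates `derivIndices u \ derivIndices (u + 1)` increasingly, so that
`E.e ∘ sectionIndex u` enumerates `K^(u) \ K^(u+1)`. Only for `u = 0` does the index set contain
finite ordinals, which is why that case looks different. -/
noncomputable def sectionIndex : ℕ → Ordinal → Ordinal
  | 0, β => if β < ω then β else β + 1
  | u + 1, β => ω ^ ((u + 1 : ℕ) : Ordinal) * (β + 1)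

lemma le_sectionIndex (u : ℕ) (β : Ordinal) : ω ^ (u : Ordinal) * β ≤ sectionIndex u β := by
  cases u with
  | zero => simp only [sectionIndex, Nat.cast_zero, opow_zero, one_mul]; split <;> simp
  | succ u => exact mul_le_mul_right (lt_add_one β).le _

lemma sectionIndex_le (u : ℕ) (β : Ordinal) : sectionIndex u β ≤ ω ^ (u : Ordinal) * (β + 1) := by
  cases u with
  | zero => simp only [sectionIndex, Nat.cast_zero, opow_zero, one_mul]; split <;> simp
  | succ u => rfl

lemma strictMono_sectionIndex (u : ℕ) : StrictMono (sectionIndex u) := by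
  intro β β' hββ'
  cases u with
  | zero =>
    simp only [sectionIndex]
    split_ifs with h h' h'
    · exact hββ'
    · exact h.trans_le ((not_lt.1 h').trans (lt_add_one β').le)
    · exact absurd (hββ'.trans h') h
    · simpa using hββ'
  | succ u =>
    exact mul_lt_mul_of_pos_left (by simpa using hββ') (opow_pos _ omega0_pos)

lemma opow_mul_add_one_mem_derivIndices (u : ℕ) {β : Ordinal} (hβ : β < wOmega) :
    ω ^ (u : Ordinal) * (β + 1) ∈ derivIndices u \ derivIndices (u + 1) := by
  have hpow : (ω : Ordinal) ^ (u : Ordinal) ≠ 0 := (opow_pos _ omega0_pos).ne'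
  refine ⟨⟨(opow_mul_add_one_lt_wOmega u hβ).le, dvd_mul_right _ _,
    Or.inr (mul_ne_zero hpow (pos_of_gt (lt_add_one β)).ne')⟩, fun ⟨_, hdvd, _⟩ => ?_⟩
  rw [Nat.cast_succ, opow_add_one, mul_dvd_mul_iff_left hpow,
    ← isSuccPrelimit_iff_omega0_dvd] at hdvd
  exact not_isSuccPrelimit_add_one β hdvd

lemma image_sectionIndex (u : ℕ) :
    sectionIndex u '' Iio wOmega = derivIndices u \ derivIndices (u + 1) := by
  have hωw : ω ≤ wOmega := left_le_opow ω omega0_pos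
  refine (image_subset_iff.2 fun β hβ => ?_).antisymm ?_
  · cases u with
    | zero =>
      simp only [mem_preimage, sectionIndex]
      split_ifs with hβω
      · refine ⟨⟨hβ.le, by simp, Or.inl rfl⟩, fun ⟨_, hdvd, h0⟩ => ?_⟩
        rw [Nat.cast_one, opow_one] at hdvd
        exact (le_of_dvd (h0.resolve_left one_ne_zero) hdvd).not_gt hβω
      · simpa using opow_mul_add_one_mem_derivIndices 0 hβ
    | succ u => exact opow_mul_add_one_mem_derivIndices (u + 1) hβ
  · rintro _ ⟨⟨hxw, ⟨γ, rfl⟩, h0⟩, hnot⟩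
    have hγ : ω ^ (u : Ordinal) * γ ≠ 0 → ∃ δ, γ = δ + 1 := by
      refine fun hx => exists_eq_add_one_of_not_omega0_dvd fun hdvd => hnot ?_
      refine ⟨hxw, ?_, Or.inr hx⟩
      rw [Nat.cast_succ, opow_add_one]
      exact mul_dvd_mul_left _ hdvd
    cases u with
    | zero =>
      simp only [Nat.cast_zero, opow_zero, one_mul] at hxw hγ ⊢
      by_cases hγω : γ < ω
      · exact ⟨γ, hγω.trans_le hωw, if_pos hγω⟩
      · obtain ⟨δ, rfl⟩ := hγ (ne_of_gt (omega0_pos.trans_le (not_lt.1 hγω)))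
        have hδω : ¬ δ < ω := fun h => hγω (isSuccLimit_omega0.add_one_lt h)
        exact ⟨δ, (lt_add_one δ).trans_le hxw, if_neg hδω⟩
    | succ u =>
      obtain ⟨δ, rfl⟩ := hγ (h0.resolve_left (Nat.succ_ne_zero u))
      exact ⟨δ, ((lt_add_one δ).trans_le (le_mul_right _ (opow_pos _ omega0_pos))).trans_le hxw,
        rfl⟩

lemma sectionIndex_succ (u : ℕ) (α : Ordinal) :
    sectionIndex (u + 1) α = ω ^ (u : Ordinal) * (ω * α + ω) := by
  rw [sectionIndex, Nat.cast_succ, opow_add_one, mul_assoc, mul_add_one]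

lemma sectionIndex_omega0_mul_add_lt (u : ℕ) (α : Ordinal) (n : ℕ) :
    sectionIndex u (ω * α + n) < sectionIndex (u + 1) α := by
  refine (sectionIndex_le u _).trans_lt ?_
  rw [sectionIndex_succ, add_assoc]
  refine mul_lt_mul_of_pos_left (add_lt_add_right ?_ _) (opow_pos _ omega0_pos)
  exact_mod_cast natCast_lt_omega0 (n + 1)

lemma exists_lt_sectionIndex_omega0_mul_add {u : ℕ} {α b : Ordinal}
    (hb : b < sectionIndex (u + 1) α) : ∃ n : ℕ, b < sectionIndex u (ω * α + n) := by
  rw [sectionIndex_succ, lt_mul_iff_of_isSuccLimit (isSuccLimit_add _ isSuccLimit_omega0)] at hb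
  obtain ⟨c, hc, hbc⟩ := hb
  obtain ⟨_, hm, hcm⟩ := (lt_add_iff_of_isSuccLimit isSuccLimit_omega0).1 hc
  obtain ⟨n, rfl⟩ := lt_omega0.1 hm
  exact ⟨n, hbc.trans_le ((mul_le_mul_right hcm.le _).trans (le_sectionIndex u _))⟩

lemma omega0_mul_add_natCast_lt_wOmega {α : Ordinal} (hα : α < wOmega) (n : ℕ) :
    ω * α + n < wOmega := by
  have := opow_mul_add_one_lt_wOmega 1 hα
  rw [Nat.cast_one, opow_one, mul_add_one] at this
  exact (add_lt_add_right (natCast_lt_omega0 n) _).trans this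

lemma OrdEnum.tendsto_sectionIndex {K : Set ℝ} (E : OrdEnum K) (hK : IsClosed K) (u : ℕ)
    {α : Ordinal} (hα : α < wOmega) :
    Tendsto (fun n : ℕ => E.e (sectionIndex u (ω * α + n))) atTop
      (𝓝 (E.e (sectionIndex (u + 1) α))) := by
  refine E.tendsto_comp hK (fun m n hmn => (strictMono_sectionIndex u).monotone ?_)
    (sectionIndex_omega0_mul_add_lt u α) ?_ fun b hb => exists_lt_sectionIndex_omega0_mul_add hb
  · exact add_le_add_right (Nat.cast_le.2 hmn) _
  · exact (image_sectionIndex (u + 1) ▸ mem_image_of_mem _ hα).1.1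

namespace SubEnum

variable {S : Set ℝ} (F : SubEnum S)

lemma strictAntiOn : StrictAntiOn F.e (Iio wOmega) :=
  fun _ hα _ hβ => (F.anti hα hβ).1

lemma image_Iio : F.e '' Iio wOmega = S :=
  (image_subset_iff.2 F.mem).antisymm fun x hx => F.surj x hx

lemma eqOn_of_strictAntiOn {g : Ordinal → ℝ} (hg : StrictAntiOn g (Iio wOmega))
    (himg : g '' Iio wOmega = S) : EqOn F.e g (Iio wOmega) :=
  F.strictAntiOn.eqOn_of_image_eq hg (F.image_Iio.trans himg.symm)

lemma eqOn_comp_sectionIndex {K : Set ℝ} (E : OrdEnum K) (hK : IsClosed K) {u : ℕ}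
    (hS : S = iterDeriv K u \ iterDeriv K (u + 1)) :
    EqOn F.e (E.e ∘ sectionIndex u) (Iio wOmega) := by
  have hmaps : MapsTo (sectionIndex u) (Iio wOmega) (Iic wOmega) := fun β hβ =>
    (image_sectionIndex u ▸ mem_image_of_mem _ hβ).1.1
  refine F.eqOn_of_strictAntiOn (E.strictAntiOn.comp_strictMonoOn
    ((strictMono_sectionIndex u).strictMonoOn _) hmaps) ?_
  have hsub : derivIndices (u + 1) ⊆ derivIndices u :=
    relDerivedSet_derivIndices u ▸ relDerivedSet_subset
  rw [hS, image_comp, image_sectionIndex, E.iterDeriv_eq_image hK, E.iterDeriv_eq_image hK,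
    (E.strictAntiOn.injOn.mono (derivIndices_subset_Iic u)).image_sdiff_subset hsub]

end SubEnum

lemma image_mul_iterDeriv_sdiff {K : Set ℝ} {ρ : ℝ} {μ : ℕ} (hρ : ρ ≠ 0)
    (hss : (fun x => ρ * x) '' iterDeriv K μ = K) :
    (fun x => ρ * x) '' (iterDeriv K μ \ iterDeriv K (μ + 1)) = K \ iterDeriv K 1 := by
  set f := Homeomorph.mulLeft₀ ρ hρ
  have hK : ∀ n, iterDeriv K n = f '' iterDeriv K (n + μ) := fun n => by
    rw [← iterDeriv_iterDeriv, ← f.iterDeriv_image, Homeomorph.coe_mulLeft₀, hss]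
  rw [← Homeomorph.coe_mulLeft₀ ρ hρ, image_sdiff f.injective, add_comm μ 1, ← hK 1]
  exact congrArg (· \ iterDeriv K 1) hss

theorem tendsto_section_limit (K : Set ℝ) (ρ : ℝ) (μ : ℕ)
    (h : SelfSimilar K ρ μ) (T : ℕ → Set ℝ)
    (hT : ∀ u, T u = iterDeriv K u \ iterDeriv K (u + 1))
    (u : ℕ) (Eu : SubEnum (T u)) (Ev : SubEnum (T (u + 1))) (E0 : SubEnum (T 0))
    (α : Ordinal.{0}) (hα : α < wOmega) :
    Tendsto (fun n : ℕ => Eu.e (Ordinal.omega0 * α + n)) atTop (𝓝 (Ev.e α)) ∧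
    (u = μ - 1 →
      Tendsto (fun n : ℕ => Eu.e (Ordinal.omega0 * α + n)) atTop (𝓝 (E0.e α / ρ))) := by
  obtain ⟨hK, -, hρ, hμ, hss, ⟨E⟩⟩ := h
  have hsec {w : ℕ} (F : SubEnum (T w)) : EqOn F.e (E.e ∘ sectionIndex w) (Iio wOmega) :=
    F.eqOn_comp_sectionIndex E hK.isClosed (hT w)
  have hlim : Tendsto (fun n : ℕ => Eu.e (ω * α + n)) atTop (𝓝 (Ev.e α)) := by
    rw [hsec Ev hα]
    exact (E.tendsto_sectionIndex hK.isClosed u hα).congr fun n =>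
      (hsec Eu (omega0_mul_add_natCast_lt_wOmega hα n)).symm
  refine ⟨hlim, fun hu => ?_⟩
  obtain rfl : μ = u + 1 := by omega
  have hρ0 : 0 < ρ := one_pos.trans hρ
  have hscale : EqOn E0.e (fun β => ρ * Ev.e β) (Iio wOmega) := by
    refine E0.eqOn_of_strictAntiOn
      (fun β hβ γ hγ hβγ => mul_lt_mul_of_pos_left (Ev.strictAntiOn hβ hγ hβγ) hρ0) ?_
    rw [← image_image (fun x => ρ * x) Ev.e, Ev.image_Iio, hT, hT,
      image_mul_iterDeriv_sdiff hρ0.ne' hss]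
    rfl
  rwa [hscale hα, mul_div_cancel_left₀ _ hρ0.ne']
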